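/- arXiv:math/0611250 — 10 statements merged into one kernel-verified Lean document; each statement's English description precedes it below -/
import Mathlib

section
/- Let c ∈ ℝ and K ≥ 0, and let μ : ℝ → ℝ be differentiable on [c, ∞) with μ(t) > 0 and |μ'(t)| ≤ K·μ(t)² for all t ∈ [c, ∞). Then the Lebesgue integral ∫_{[c,∞)} μ(s) ds diverges, i.e. equals +∞ (equivalently, μ is not integrable on [c, ∞)). -/
/-!
Since `(1/μ)' = -μ'/μ²` is bounded by `K`, the mean value theorem gives
`1/μ(t) ≤ 1/μ(c) + K (t - c)`. Hence `μ` dominates a positive multiple of `1/(t - b)` on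
`[c, ∞)` for a suitable `b`, and `1/(t - b)` is not integrable at infinity.
-/

open MeasureTheory Set

theorem Convex.inv_sub_inv_le_of_abs_deriv_le_mul_sq {D : Set ℝ} (hD : Convex ℝ D)
    {f f' : ℝ → ℝ} {K : ℝ} (hf : ∀ t ∈ D, HasDerivAt f (f' t) t) (hpos : ∀ t ∈ D, 0 < f t)
    (hbound : ∀ t ∈ D, |f' t| ≤ K * f t ^ 2) {x y : ℝ} (hx : x ∈ D) (hy : y ∈ D) (hxy : x ≤ y) :
    (f y)⁻¹ - (f x)⁻¹ ≤ K * (y - x) := by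
  have hinv : ∀ t ∈ D, HasDerivAt (fun s => (f s)⁻¹) (-f' t / f t ^ 2) t := fun t ht =>
    (hf t ht).inv (hpos t ht).ne'
  refine hD.image_sub_le_mul_sub_of_deriv_le
    (fun t ht => (hinv t ht).continuousAt.continuousWithinAt)
    (fun t ht => (hinv t (interior_subset ht)).differentiableAt.differentiableWithinAt)
    (fun t ht => ?_) x hx y hy hxy
  have ht := interior_subset ht
  rw [(hinv t ht).deriv, div_le_iff₀ (by positivity [hpos t ht])]
  exact (neg_le_abs _).trans (hbound t ht)

theorem not_integrableOn_Ici_inv_sub (a b : ℝ) :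
    ¬ IntegrableOn (fun x => (x - b)⁻¹) (Ici a) := by
  intro h
  refine not_integrableOn_Ici_inv (a := a - b) <|
    ((measurePreserving_sub_right volume b).integrableOn_comp_preimage
      (measurableEmbedding_subRight b)).mp ?_
  rwa [preimage_sub_const_Ici, sub_add_cancel]

theorem lintegral_Ici_eq_top_of_inv_le_mul_sub {f : ℝ → ℝ} {a b k : ℝ}
    (hf : AEStronglyMeasurable f (volume.restrict (Ici a))) (hk : 0 < k)
    (hpos : ∀ t ∈ Ici a, 0 < f t) (hle : ∀ t ∈ Ici a, (f t)⁻¹ ≤ k * (t - b)) :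
    ∫⁻ t in Ici a, ENNReal.ofReal (f t) = ⊤ := by
  rw [← not_ne_iff, lintegral_ofReal_ne_top_iff_integrable hf
    ((ae_restrict_mem measurableSet_Ici).mono fun t ht => (hpos t ht).le)]
  intro hint
  refine not_integrableOn_Ici_inv_sub a b ?_
  have : IntegrableOn (fun t => k⁻¹ * (t - b)⁻¹) (Ici a) := by
    refine hint.mono' (by fun_prop) ((ae_restrict_mem measurableSet_Ici).mono fun t ht => ?_)
    have hb : 0 < k * (t - b) := (inv_pos.mpr (hpos t ht)).trans_le (hle t ht)
    rw [← mul_inv, Real.norm_of_nonneg (inv_pos.mpr hb).le]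
    exact inv_le_of_inv_le₀ (hpos t ht) (hle t ht)
  simpa only [IntegrableOn, ← mul_assoc, mul_inv_cancel₀ hk.ne', one_mul] using this.const_mul k

theorem stmt_1_general (c K : ℝ) (μ μ' : ℝ → ℝ)
    (hderiv : ∀ t ∈ Set.Ici c, HasDerivAt μ (μ' t) t)
    (hpos : ∀ t ∈ Set.Ici c, 0 < μ t)
    (hbound : ∀ t ∈ Set.Ici c, |μ' t| ≤ K * μ t ^ 2) :
    ∫⁻ s in Set.Ici c, ENNReal.ofReal (μ s) = ⊤ := by
  -- `K` itself may vanish, and the comparison function needs a positive slope.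
  set k := max K 1
  have hk : 0 < k := lt_max_of_lt_right one_pos
  have hμ : AEStronglyMeasurable μ (volume.restrict (Ici c)) :=
    ContinuousOn.aestronglyMeasurable
      (fun t ht => (hderiv t ht).continuousAt.continuousWithinAt) measurableSet_Ici
  refine lintegral_Ici_eq_top_of_inv_le_mul_sub (b := c - (μ c)⁻¹ / k) hμ hk hpos
    fun t ht => ?_
  have hinc := (convex_Ici c).inv_sub_inv_le_of_abs_deriv_le_mul_sq hderiv hpos hbound
    self_mem_Ici ht ht
  calc (μ t)⁻¹ ≤ (μ c)⁻¹ + K * (t - c) := by linarith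
    _ ≤ (μ c)⁻¹ + k * (t - c) := by gcongr; exacts [sub_nonneg.mpr ht, le_max_left K 1]
    _ = k * (t - (c - (μ c)⁻¹ / k)) := by field_simp; ring

/-- Appendix A, case `b = ∞`: a positive function on `[c, ∞)` whose derivative
satisfies `|μ'| ≤ K μ²` has infinite Lebesgue integral on `[c, ∞)`. -/
theorem stmt_1 (c K : ℝ) (hK : 0 ≤ K) (μ μ' : ℝ → ℝ)
    (hderiv : ∀ t ∈ Set.Ici c, HasDerivAt μ (μ' t) t)
    (hpos : ∀ t ∈ Set.Ici c, 0 < μ t)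
    (hbound : ∀ t ∈ Set.Ici c, |μ' t| ≤ K * μ t ^ 2) :
    ∫⁻ s in Set.Ici c, ENNReal.ofReal (μ s) = ⊤ :=
  stmt_1_general c K μ μ' hderiv hpos hbound
end

section
/- Let c < b be real numbers and K ≥ 0, and let μ : ℝ → ℝ be differentiable on [c, b) with μ(t) > 0 and |μ'(t)| ≤ K·μ(t)² for all t ∈ [c, b), and suppose μ(t) → +∞ as t → b from the left. Then the Lebesgue integral ∫_{[c,b)} μ(s) ds diverges, i.e. equals +∞. -/
open MeasureTheory

/-- Appendix A, case `b < ∞`: a positive function on `[c, b)` blowing up at `b`,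
whose derivative satisfies `|μ'| ≤ K μ²`, has infinite Lebesgue integral on `[c, b)`. -/
theorem stmt_2 (c b K : ℝ) (hcb : c < b) (hK : 0 ≤ K) (μ μ' : ℝ → ℝ)
    (hderiv : ∀ t ∈ Set.Ico c b, HasDerivAt μ (μ' t) t)
    (hpos : ∀ t ∈ Set.Ico c b, 0 < μ t)
    (hbound : ∀ t ∈ Set.Ico c b, |μ' t| ≤ K * μ t ^ 2)
    (hblow : Filter.Tendsto μ (nhdsWithin b (Set.Iio b)) Filter.atTop) :
    ∫⁻ s in Set.Ico c b, ENNReal.ofReal (μ s) = ⊤ := by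
  set K' : ℝ := K + 1 with hK'def
  have hK' : (0 : ℝ) < K' := by positivity
  set ν : ℝ → ℝ := fun t => (μ t)⁻¹ with hνdef
  -- derivative of ν within the interval
  have hνderiv : ∀ t ∈ Set.Ico c b,
      HasDerivWithinAt ν (-μ' t / μ t ^ 2) (Set.Ico c b) t := fun t ht =>
    ((hderiv t ht).inv (hpos t ht).ne').hasDerivWithinAt
  have hνbound : ∀ t ∈ Set.Ico c b, ‖-μ' t / μ t ^ 2‖ ≤ K' := by
    intro t ht
    have h2 : (0 : ℝ) < μ t ^ 2 := pow_pos (hpos t ht) 2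
    rw [Real.norm_eq_abs, abs_div, abs_neg, abs_of_pos h2, div_le_iff₀ h2]
    calc |μ' t| ≤ K * μ t ^ 2 := hbound t ht
      _ ≤ K' * μ t ^ 2 := by nlinarith
  have hlip : ∀ x ∈ Set.Ico c b, ∀ y ∈ Set.Ico c b, ‖ν y - ν x‖ ≤ K' * ‖y - x‖ :=
    fun x hx y hy =>
      (convex_Ico c b).norm_image_sub_le_of_norm_hasDerivWithin_le hνderiv hνbound hx hy
  -- ν tends to 0 at b⁻
  have hν0 : Filter.Tendsto ν (nhdsWithin b (Set.Iio b)) (nhds 0) :=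
    hblow.inv_tendsto_atTop
  -- ν t ≤ K' (b - t)
  have hνle : ∀ t ∈ Set.Ico c b, ν t ≤ K' * (b - t) := by
    intro t ht
    have hev : ∀ᶠ s in nhdsWithin b (Set.Iio b), ν t - ν s ≤ K' * (b - t) := by
      filter_upwards [Ioo_mem_nhdsLT_of_mem ⟨ht.2, le_refl b⟩] with s hs
      have hsI : s ∈ Set.Ico c b := ⟨le_of_lt (lt_of_le_of_lt ht.1 hs.1), hs.2⟩
      have := hlip t ht s hsI
      rw [Real.norm_eq_abs, Real.norm_eq_abs] at this
      have h1 : ν t - ν s ≤ |ν s - ν t| := by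
        rw [abs_sub_comm]; exact le_abs_self _
      have h2 : |s - t| = s - t := abs_of_pos (by linarith [hs.1])
      nlinarith [hs.2, hs.1]
    have htend : Filter.Tendsto (fun s => ν t - ν s) (nhdsWithin b (Set.Iio b))
        (nhds (ν t - 0)) := tendsto_const_nhds.sub hν0
    have := le_of_tendsto htend hev
    linarith
  -- lower bound for μ
  have hlow : ∀ t ∈ Set.Ico c b, (K' * (b - t))⁻¹ ≤ μ t := by
    intro t ht
    have hbt : (0 : ℝ) < b - t := sub_pos.2 ht.2
    have hνpos : 0 < ν t := inv_pos.2 (hpos t ht)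
    have h := hνle t ht
    calc (K' * (b - t))⁻¹ ≤ (ν t)⁻¹ := by
          apply inv_anti₀ hνpos h
      _ = μ t := by rw [hνdef]; simp
  -- the comparison function
  set g : ℝ → ℝ := fun s => (K' * (b - s))⁻¹ with hgdef
  have hg_meas : Measurable g := (measurable_const.mul (measurable_const.sub measurable_id)).inv
  have hle : ∫⁻ s in Set.Ico c b, ENNReal.ofReal (g s) ≤
      ∫⁻ s in Set.Ico c b, ENNReal.ofReal (μ s) :=
    setLIntegral_mono' measurableSet_Ico fun s hs => ENNReal.ofReal_le_ofReal (hlow s hs)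
  -- g has infinite integral
  have hgtop : ∫⁻ s in Set.Ico c b, ENNReal.ofReal (g s) = ⊤ := by
    by_contra h
    have hlt : ∫⁻ s in Set.Ico c b, ENNReal.ofReal (g s) < ⊤ := lt_top_iff_ne_top.2 h
    have hg_nonneg : 0 ≤ᵐ[volume.restrict (Set.Ico c b)] g := by
      refine (ae_restrict_iff' measurableSet_Ico).2 (Filter.Eventually.of_forall fun s hs => ?_)
      have : (0 : ℝ) < b - s := sub_pos.2 hs.2
      positivity
    have hfin : HasFiniteIntegral g (volume.restrict (Set.Ico c b)) :=
      (hasFiniteIntegral_iff_ofReal hg_nonneg).2 hlt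
    have hgint : IntegrableOn g (Set.Ico c b) := ⟨hg_meas.aestronglyMeasurable, hfin⟩
    have hint2 : IntegrableOn (fun s => (s - b)⁻¹) (Set.Ico c b) := by
      have h4 : IntegrableOn (fun x => -(K' * g x)) (Set.Ico c b) := (hgint.const_mul K').neg
      refine h4.congr_fun (fun s _ => ?_) measurableSet_Ico
      show -(K' * (K' * (b - s))⁻¹) = (s - b)⁻¹
      rw [mul_inv, ← mul_assoc, mul_inv_cancel₀ hK'.ne', one_mul, neg_inv, neg_sub]
    have hint3 : IntegrableOn (fun s => (s - b)⁻¹) (Set.Ioc c b) := by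
      unfold IntegrableOn
      rwa [← Measure.restrict_congr_set Ico_ae_eq_Ioc]
    have hiint : IntervalIntegrable (fun s => (s - b)⁻¹) volume c b :=
      (intervalIntegrable_iff_integrableOn_Ioc_of_le hcb.le).2 hint3
    rcases intervalIntegrable_sub_inv_iff.1 hiint with h1 | h2
    · exact hcb.ne h1
    · exact h2 (Set.right_mem_uIcc)
  exact eq_top_mono hle hgtop
end

section
/- Let E be a real inner product space, let I ⊆ ℝ be an interval, let μ : ℝ → ℝ, and let c : ℝ → E be twice differentiable on I with c''(t) = μ(t)² • c(t) and c'(t) ≠ 0 for all t ∈ I. Then the function t ↦ ⟪c'(t), c(t)⟫ / ‖c'(t)‖ is monotone nondecreasing on I. -/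
open scoped RealInnerProductSpace

/-!
Write `v = c'` and `a = μ²`, so that `v' = a • c`. The derivative of `⟪v, c⟫ / ‖v‖` is
`‖v‖ + a (‖v‖² ‖c‖² - ⟪v, c⟫²) / ‖v‖³`, which is nonnegative by Cauchy–Schwarz; the mean value
theorem on the interval `I` concludes.
-/

section InnerProductSpace

variable {E : Type*} [NormedAddCommGroup E] [InnerProductSpace ℝ E]

theorem HasDerivAt.norm_of_ne_zero {f : ℝ → E} {f' : E} {t : ℝ} (hf : HasDerivAt f f' t)
    (h0 : f t ≠ 0) : HasDerivAt (fun s => ‖f s‖) (⟪f t, f'⟫ / ‖f t‖) t := by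
  have hpos : 0 < ‖f t‖ := norm_pos_iff.2 h0
  have hsqrt := hf.norm_sq.sqrt (by positivity)
  simp only [Real.sqrt_sq (norm_nonneg _)] at hsqrt
  convert hsqrt using 1
  field_simp

theorem HasDerivAt.inner_div_norm {f g : ℝ → E} {f' g' : E} {t : ℝ} (hf : HasDerivAt f f' t)
    (hg : HasDerivAt g g' t) (h0 : f t ≠ 0) :
    HasDerivAt (fun s => ⟪f s, g s⟫ / ‖f s‖)
      ((⟪f', g t⟫ + ⟪f t, g'⟫) / ‖f t‖ - ⟪f t, g t⟫ * ⟪f t, f'⟫ / ‖f t‖ ^ 3) t := by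
  have hpos : 0 < ‖f t‖ := norm_pos_iff.2 h0
  refine ((hf.inner ℝ hg).div (hf.norm_of_ne_zero h0) hpos.ne').congr_deriv ?_
  field_simp
  ring

theorem inner_mul_inner_smul_le_norm_sq_mul {a : ℝ} (ha : 0 ≤ a) (v x : E) :
    ⟪v, x⟫ * ⟪v, a • x⟫ ≤ ‖v‖ ^ 2 * ⟪a • x, x⟫ := by
  rw [real_inner_smul_right, real_inner_smul_left, ← real_inner_self_eq_norm_sq]
  nlinarith [mul_le_mul_of_nonneg_left (real_inner_mul_inner_self_le v x) ha]

end InnerProductSpace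

/-- Monotonicity along the radial ODE `c'' = μ² • c`: the function
`t ↦ ⟪c'(t), c(t)⟫ / ‖c'(t)‖` is nondecreasing on the interval `I`. -/
theorem stmt_3 (E : Type*) [NormedAddCommGroup E] [InnerProductSpace ℝ E]
    (I : Set ℝ) (hI : I.OrdConnected) (μ : ℝ → ℝ) (c c' c'' : ℝ → E)
    (hc : ∀ t ∈ I, HasDerivAt c (c' t) t)
    (hc' : ∀ t ∈ I, HasDerivAt c' (c'' t) t)
    (hode : ∀ t ∈ I, c'' t = μ t ^ 2 • c t)
    (hne : ∀ t ∈ I, c' t ≠ 0) :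
    MonotoneOn (fun t => ⟪c' t, c t⟫ / ‖c' t‖) I := by
  have hderiv (t : ℝ) (ht : t ∈ I) := (hc' t ht).inner_div_norm (hc t ht) (hne t ht)
  refine monotoneOn_of_hasDerivWithinAt_nonneg hI.convex
    (fun t ht => (hderiv t ht).continuousAt.continuousWithinAt)
    (fun t ht => (hderiv t (interior_subset ht)).hasDerivWithinAt) fun t ht => ?_
  replace ht := interior_subset ht
  have hpos : 0 < ‖c' t‖ := norm_pos_iff.2 (hne t ht)
  have hCS := inner_mul_inner_smul_le_norm_sq_mul (sq_nonneg (μ t)) (c' t) (c t)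
  rw [hode t ht, real_inner_self_eq_norm_sq, sub_nonneg, div_le_div_iff₀ (by positivity) hpos]
  calc ⟪c' t, c t⟫ * ⟪c' t, μ t ^ 2 • c t⟫ * ‖c' t‖
      ≤ ‖c' t‖ ^ 2 * ⟪μ t ^ 2 • c t, c t⟫ * ‖c' t‖ := by gcongr
    _ ≤ (⟪μ t ^ 2 • c t, c t⟫ + ‖c' t‖ ^ 2) * ‖c' t‖ ^ 3 := by nlinarith [pow_pos hpos 5]
end

section
/- Let E be a real inner product space, b ∈ (0, +∞], μ : ℝ → ℝ, and let c : ℝ → E be twice differentiable on [0, b) with c''(t) = μ(t)² • c(t) and c'(t) ≠ 0 for all t ∈ [0, b). Assume ⟪c'(0), c(0)⟫ > 0. Then for every t ∈ [0, b), the derivative at t of the function s ↦ ‖c'(s)‖ satisfies (d/dt)‖c'(t)‖ ≥ K₁·μ(t)², where K₁ = ⟪c'(0), c(0)⟫ / ‖c'(0)‖ > 0. -/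
open scoped RealInnerProductSpace

/-- derivative of the norm of a nonvanishing curve -/
lemma hasDerivAt_norm_comp {E : Type*} [NormedAddCommGroup E] [InnerProductSpace ℝ E]
    {f : ℝ → E} {f' : E} {x : ℝ} (hf : HasDerivAt f f' x) (hx : f x ≠ 0) :
    HasDerivAt (fun t => ‖f t‖) (⟪f x, f'⟫ / ‖f x‖) x := by
  have hsq : HasDerivAt (fun t => ‖f t‖ ^ 2) (2 * ⟪f x, f'⟫) x := hf.norm_sq
  have hne : ‖f x‖ ^ 2 ≠ 0 := pow_ne_zero _ (norm_ne_zero_iff.mpr hx)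
  have h := hsq.sqrt hne
  have hnorm : Real.sqrt (‖f x‖ ^ 2) = ‖f x‖ := Real.sqrt_sq (norm_nonneg _)
  have : (fun t => Real.sqrt (‖f t‖ ^ 2)) = fun t => ‖f t‖ := by
    funext t; exact Real.sqrt_sq (norm_nonneg _)
  rw [this, hnorm] at h
  convert h using 1
  have : ‖f x‖ ≠ 0 := norm_ne_zero_iff.mpr hx
  field_simp

/-- Derivative lower bound along the radial ODE `c'' = μ² • c` on `[0, b)`
(with `b ∈ (0, +∞]`): if `⟪c'(0), c(0)⟫ > 0` then
`(d/dt)‖c'(t)‖ ≥ K₁ · μ(t)²` where `K₁ = ⟪c'(0), c(0)⟫ / ‖c'(0)‖`. -/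
theorem stmt_4 (E : Type*) [NormedAddCommGroup E] [InnerProductSpace ℝ E]
    (b : EReal) (hb : 0 < b) (μ : ℝ → ℝ) (c c' c'' : ℝ → E)
    (hc : ∀ t : ℝ, 0 ≤ t → (t : EReal) < b → HasDerivAt c (c' t) t)
    (hc' : ∀ t : ℝ, 0 ≤ t → (t : EReal) < b → HasDerivAt c' (c'' t) t)
    (hode : ∀ t : ℝ, 0 ≤ t → (t : EReal) < b → c'' t = μ t ^ 2 • c t)
    (hne : ∀ t : ℝ, 0 ≤ t → (t : EReal) < b → c' t ≠ 0)
    (hinit : 0 < ⟪c' 0, c 0⟫) :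
    ∀ t : ℝ, 0 ≤ t → (t : EReal) < b →
      (⟪c' 0, c 0⟫ / ‖c' 0‖) * μ t ^ 2 ≤ deriv (fun s => ‖c' s‖) t := by
  intro t ht0 htb
  set f : ℝ → ℝ := fun s => ⟪c' s, c s⟫ / ‖c' s‖ with hf_def
  -- derivative facts at every point of [0, b)
  have hnpos : ∀ s : ℝ, 0 ≤ s → (s : EReal) < b → 0 < ‖c' s‖ := fun s h1 h2 =>
    norm_pos_iff.mpr (hne s h1 h2)
  have hDnorm : ∀ s : ℝ, 0 ≤ s → (s : EReal) < b →
      HasDerivAt (fun u => ‖c' u‖) (⟪c' s, c'' s⟫ / ‖c' s‖) s := fun s h1 h2 =>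
    hasDerivAt_norm_comp (hc' s h1 h2) (hne s h1 h2)
  have hDf : ∀ s : ℝ, 0 ≤ s → (s : EReal) < b →
      HasDerivAt f
        (((⟪c' s, c' s⟫ + ⟪c'' s, c s⟫) * ‖c' s‖ -
          ⟪c' s, c s⟫ * (⟪c' s, c'' s⟫ / ‖c' s‖)) / ‖c' s‖ ^ 2) s := fun s h1 h2 =>
    HasDerivAt.div ((hc' s h1 h2).inner ℝ (hc s h1 h2)) (hDnorm s h1 h2)
      (ne_of_gt (hnpos s h1 h2))
  -- the derivative of f is nonnegative on [0, b)
  have hDf_nonneg : ∀ s : ℝ, 0 ≤ s → (s : EReal) < b → 0 ≤ deriv f s := by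
    intro s h1 h2
    rw [(hDf s h1 h2).deriv]
    apply div_nonneg _ (sq_nonneg _)
    have hn := hnpos s h1 h2
    have hcs : ⟪c'' s, c s⟫ = μ s ^ 2 * ⟪c s, c s⟫ := by
      rw [hode s h1 h2, real_inner_smul_left]
    have hcs' : ⟪c' s, c'' s⟫ = μ s ^ 2 * ⟪c' s, c s⟫ := by
      rw [hode s h1 h2, real_inner_smul_right]
    rw [hcs, hcs']
    have hCS := real_inner_mul_inner_self_le (c' s) (c s)
    have h1' : ⟪c' s, c' s⟫ = ‖c' s‖ ^ 2 := real_inner_self_eq_norm_sq _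
    have h2' : (0:ℝ) ≤ ⟪c s, c s⟫ := real_inner_self_nonneg
    have key : 0 ≤ ((⟪c' s, c' s⟫ + μ s ^ 2 * ⟪c s, c s⟫) * ‖c' s‖ -
        ⟪c' s, c s⟫ * (μ s ^ 2 * ⟪c' s, c s⟫ / ‖c' s‖)) * ‖c' s‖ := by
      have : ⟪c' s, c s⟫ * (μ s ^ 2 * ⟪c' s, c s⟫ / ‖c' s‖) * ‖c' s‖ =
          μ s ^ 2 * (⟪c' s, c s⟫ * ⟪c' s, c s⟫) := by field_simp
      rw [sub_mul, this, h1']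
      have hmm : 0 ≤ μ s ^ 2 * (‖c' s‖ ^ 2 * ⟪c s, c s⟫ - ⟪c' s, c s⟫ * ⟪c' s, c s⟫) := by
        apply mul_nonneg (sq_nonneg _)
        rw [← h1']; linarith [hCS]
      nlinarith [hmm, sq_nonneg (‖c' s‖), sq_nonneg (‖c' s‖ ^ 2), hn]
    nlinarith [key, hn]
  -- f is monotone on [0, t]
  have hmem : ∀ s : ℝ, s ∈ Set.Icc (0:ℝ) t → 0 ≤ s ∧ (s : EReal) < b := by
    intro s hs
    exact ⟨hs.1, lt_of_le_of_lt (EReal.coe_le_coe_iff.mpr hs.2) htb⟩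
  have hdiff : DifferentiableOn ℝ f (Set.Icc 0 t) := by
    intro s hs
    exact ((hDf s (hmem s hs).1 (hmem s hs).2).differentiableAt).differentiableWithinAt
  have hmono : MonotoneOn f (Set.Icc 0 t) := by
    apply monotoneOn_of_deriv_nonneg (convex_Icc 0 t) hdiff.continuousOn
    · intro s hs
      rw [interior_Icc] at hs
      exact ((hDf s (hmem s ⟨le_of_lt hs.1, le_of_lt hs.2⟩).1
        (hmem s ⟨le_of_lt hs.1, le_of_lt hs.2⟩).2).differentiableAt).differentiableWithinAt
    · intro s hs
      rw [interior_Icc] at hs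
      exact hDf_nonneg s (le_of_lt hs.1) (hmem s ⟨le_of_lt hs.1, le_of_lt hs.2⟩).2
  have hf0t : f 0 ≤ f t := hmono ⟨le_refl 0, ht0⟩ ⟨ht0, le_refl t⟩ ht0
  -- compute the derivative of the norm at t
  have hderiv : deriv (fun s => ‖c' s‖) t = μ t ^ 2 * f t := by
    rw [(hDnorm t ht0 htb).deriv, hode t ht0 htb, real_inner_smul_right, hf_def]
    ring
  rw [hderiv]
  calc (⟪c' 0, c 0⟫ / ‖c' 0‖) * μ t ^ 2 = f 0 * μ t ^ 2 := rfl
    _ ≤ f t * μ t ^ 2 := mul_le_mul_of_nonneg_right hf0t (sq_nonneg _)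
    _ = μ t ^ 2 * f t := by ring
end

section
/- Let b ∈ (0, +∞] and let λ, μ : ℝ → ℝ be differentiable on [0, b) with λ(0) ≥ 0, μ(t) > 0 for all t ∈ [0, b). Suppose there are constants K₁ > 0 and K₂ > 0 such that λ'(t) ≥ K₁·μ(t)² and |μ'(t)| ≤ K₂·μ(t)² for all t ∈ [0, b), and suppose ∫_{[0,b)} μ(s) ds = +∞. Then ∫_{[0,b)} λ(s) ds = +∞. -/
open MeasureTheory

lemma mono_aux5 {f f' : ℝ → ℝ} {a t : ℝ}
    (hd : ∀ s ∈ Set.Icc a t, HasDerivAt f (f' s) s)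
    (h0 : ∀ s ∈ Set.Icc a t, 0 ≤ f' s) (hat : a ≤ t) : f a ≤ f t := by
  have hm : MonotoneOn f (Set.Icc a t) :=
    monotoneOn_of_deriv_nonneg (convex_Icc a t)
      (fun s hs => (hd s hs).continuousAt.continuousWithinAt)
      (fun s hs => ((hd s (interior_subset hs)).differentiableAt).differentiableWithinAt)
      (fun s hs => by
        rw [(hd s (interior_subset hs)).deriv]; exact h0 s (interior_subset hs))
  exact hm (Set.left_mem_Icc.2 hat) (Set.right_mem_Icc.2 hat) hat

lemma strict_aux5 {f f' : ℝ → ℝ} {a t : ℝ}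
    (hd : ∀ s ∈ Set.Icc a t, HasDerivAt f (f' s) s)
    (h0 : ∀ s ∈ Set.Icc a t, 0 < f' s) (hat : a < t) : f a < f t := by
  have hm : StrictMonoOn f (Set.Icc a t) :=
    strictMonoOn_of_deriv_pos (convex_Icc a t)
      (fun s hs => (hd s hs).continuousAt.continuousWithinAt)
      (fun s hs => by
        rw [(hd s (interior_subset hs)).deriv]; exact h0 s (interior_subset hs))
  exact hm (Set.left_mem_Icc.2 hat.le) (Set.right_mem_Icc.2 hat.le) hat

/-- Comparison argument: on `[0, b)` (with `b ∈ (0, +∞]`), if `lam' ≥ K₁ μ²`,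
`|μ'| ≤ K₂ μ²`, `lam 0 ≥ 0`, `μ > 0`, and `∫_{[0,b)} μ = +∞`, then
`∫_{[0,b)} lam = +∞`. -/
theorem stmt_5 (b : EReal) (hb : 0 < b) (lam lam' μ μ' : ℝ → ℝ)
    (hlamderiv : ∀ t : ℝ, 0 ≤ t → (t : EReal) < b → HasDerivAt lam (lam' t) t)
    (hμderiv : ∀ t : ℝ, 0 ≤ t → (t : EReal) < b → HasDerivAt μ (μ' t) t)
    (hlam0 : 0 ≤ lam 0)
    (hμpos : ∀ t : ℝ, 0 ≤ t → (t : EReal) < b → 0 < μ t)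
    (K₁ K₂ : ℝ) (hK₁ : 0 < K₁) (hK₂ : 0 < K₂)
    (hlam' : ∀ t : ℝ, 0 ≤ t → (t : EReal) < b → K₁ * μ t ^ 2 ≤ lam' t)
    (hμ' : ∀ t : ℝ, 0 ≤ t → (t : EReal) < b → |μ' t| ≤ K₂ * μ t ^ 2)
    (hdiv : ∫⁻ s in {t : ℝ | 0 ≤ t ∧ (t : EReal) < b}, ENNReal.ofReal (μ s) = ⊤) :
    ∫⁻ s in {t : ℝ | 0 ≤ t ∧ (t : EReal) < b}, ENNReal.ofReal (lam s) = ⊤ := by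
  set c : ℝ := K₁ / K₂ with hc_def
  have hc : 0 < c := div_pos hK₁ hK₂
  have hcK : c * K₂ = K₁ := div_mul_cancel₀ _ hK₂.ne'
  -- membership helper
  have hmem : ∀ t : ℝ, 0 ≤ t → (t : EReal) < b → ∀ s ∈ Set.Icc (0:ℝ) t,
      0 ≤ s ∧ (s : EReal) < b := by
    intro t ht htb s hs
    exact ⟨hs.1, lt_of_le_of_lt (EReal.coe_le_coe_iff.2 hs.2) htb⟩
  -- Claim A : c * μ t ≤ lam t + c * μ 0
  have hA : ∀ t : ℝ, 0 ≤ t → (t : EReal) < b → c * μ t ≤ lam t + c * μ 0 := by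
    intro t ht htb
    have hd : ∀ s ∈ Set.Icc (0:ℝ) t,
        HasDerivAt (fun s => lam s - c * μ s) (lam' s - c * μ' s) s := by
      intro s hs
      obtain ⟨hs0, hsb⟩ := hmem t ht htb s hs
      exact (hlamderiv s hs0 hsb).sub ((hμderiv s hs0 hsb).const_mul c)
    have h0 : ∀ s ∈ Set.Icc (0:ℝ) t, 0 ≤ lam' s - c * μ' s := by
      intro s hs
      obtain ⟨hs0, hsb⟩ := hmem t ht htb s hs
      have h1 := hlam' s hs0 hsb
      have h2 : μ' s ≤ K₂ * μ s ^ 2 := (le_abs_self _).trans (hμ' s hs0 hsb)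
      nlinarith
    have key := mono_aux5 (f' := fun s => lam' s - c * μ' s) hd h0 ht
    linarith
  -- Claim B : lam is nonneg on the set (monotone from lam 0)
  have hB : ∀ t : ℝ, 0 ≤ t → (t : EReal) < b → lam 0 ≤ lam t := by
    intro t ht htb
    refine mono_aux5 (f' := lam') (fun s hs => ?_) (fun s hs => ?_) ht
    · obtain ⟨hs0, hsb⟩ := hmem t ht htb s hs
      exact hlamderiv s hs0 hsb
    · obtain ⟨hs0, hsb⟩ := hmem t ht htb s hs
      have h1 := hlam' s hs0 hsb
      have h2 := hμpos s hs0 hsb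
      nlinarith
  rcases eq_top_or_lt_top b with hbt | hbt
  · -- b = ⊤ : set is Ici 0, infinite measure, lam ≥ lam 1 > 0 on [1, ∞)
    subst hbt
    have hS : {t : ℝ | 0 ≤ t ∧ (t : EReal) < ⊤} = Set.Ici 0 := by
      ext t; simp [EReal.coe_lt_top]
    rw [hS]
    have hlam1 : 0 < lam 1 := by
      have : lam 0 < lam 1 := by
        refine strict_aux5 (f' := lam') (fun s hs => ?_) (fun s hs => ?_) one_pos
        · exact hlamderiv s hs.1 (EReal.coe_lt_top s)
        · have h1 := hlam' s hs.1 (EReal.coe_lt_top s)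
          have h2 := hμpos s hs.1 (EReal.coe_lt_top s)
          have h3 : 0 < K₁ * μ s ^ 2 := by positivity
          linarith
      linarith
    have hlow : ∀ s ∈ Set.Ici (1:ℝ), ENNReal.ofReal (lam 1) ≤ ENNReal.ofReal (lam s) := by
      intro s hs
      apply ENNReal.ofReal_le_ofReal
      refine mono_aux5 (f' := lam') (fun u hu => ?_) (fun u hu => ?_) hs
      · exact hlamderiv u (le_trans zero_le_one hu.1) (EReal.coe_lt_top u)
      · have h0u : (0:ℝ) ≤ u := le_trans zero_le_one hu.1
        have h1 := hlam' u h0u (EReal.coe_lt_top u)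
        have h2 := hμpos u h0u (EReal.coe_lt_top u)
        nlinarith
    have h1 : (⊤ : ENNReal) ≤ ∫⁻ s in Set.Ici (1:ℝ), ENNReal.ofReal (lam s) := by
      have hconst : ∫⁻ _ in Set.Ici (1:ℝ), ENNReal.ofReal (lam 1) = ⊤ := by
        rw [setLIntegral_const, Real.volume_Ici,
          ENNReal.mul_top (by simpa [ENNReal.ofReal_eq_zero] using hlam1.not_ge)]
      rw [← hconst]
      rw [← lintegral_indicator measurableSet_Ici, ← lintegral_indicator measurableSet_Ici]
      apply lintegral_mono
      intro x
      by_cases hx : x ∈ Set.Ici (1:ℝ)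
      · simpa [Set.indicator_of_mem hx] using hlow x hx
      · simp [Set.indicator_of_notMem hx]
    have h2 : ∫⁻ s in Set.Ici (1:ℝ), ENNReal.ofReal (lam s)
        ≤ ∫⁻ s in Set.Ici (0:ℝ), ENNReal.ofReal (lam s) :=
      lintegral_mono_set (Set.Ici_subset_Ici.2 zero_le_one)
    exact top_le_iff.1 (h1.trans h2)
  · -- b finite
    have hbne : b ≠ ⊥ := ne_bot_of_gt hb
    obtain ⟨r, rfl⟩ : ∃ r : ℝ, b = (r : EReal) :=
      ⟨b.toReal, (EReal.coe_toReal hbt.ne hbne).symm⟩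
    have hS : {t : ℝ | 0 ≤ t ∧ (t : EReal) < (r : EReal)} = Set.Ico 0 r := by
      ext t; simp [Set.mem_Ico, EReal.coe_lt_coe_iff]
    rw [hS] at hdiv ⊢
    -- ∫ c μ = ⊤
    have hcμ : ∫⁻ s in Set.Ico (0:ℝ) r, ENNReal.ofReal (c * μ s) = ⊤ := by
      have : ∀ s, ENNReal.ofReal (c * μ s) = ENNReal.ofReal c * ENNReal.ofReal (μ s) :=
        fun s => ENNReal.ofReal_mul hc.le
      simp_rw [this]
      rw [lintegral_const_mul' _ _ ENNReal.ofReal_ne_top, hdiv,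
        ENNReal.mul_top (by simpa [ENNReal.ofReal_eq_zero] using hc.not_ge)]
    -- pointwise bound on the set
    have hpt : ∀ s ∈ Set.Ico (0:ℝ) r, ENNReal.ofReal (c * μ s)
        ≤ ENNReal.ofReal (lam s) + ENNReal.ofReal (c * μ 0) := by
      intro s hs
      have hsb : (s : EReal) < (r : EReal) := EReal.coe_lt_coe_iff.2 hs.2
      calc ENNReal.ofReal (c * μ s) ≤ ENNReal.ofReal (lam s + c * μ 0) :=
            ENNReal.ofReal_le_ofReal (hA s hs.1 hsb)
        _ ≤ ENNReal.ofReal (lam s) + ENNReal.ofReal (c * μ 0) := ENNReal.ofReal_add_le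
    have hle : (⊤ : ENNReal) ≤ (∫⁻ s in Set.Ico (0:ℝ) r, ENNReal.ofReal (lam s))
        + ENNReal.ofReal (c * μ 0) * volume (Set.Ico (0:ℝ) r) := by
      rw [← hcμ]
      have step : ∫⁻ s in Set.Ico (0:ℝ) r, ENNReal.ofReal (c * μ s)
          ≤ ∫⁻ s in Set.Ico (0:ℝ) r,
              (ENNReal.ofReal (lam s) + ENNReal.ofReal (c * μ 0)) := by
        rw [← lintegral_indicator measurableSet_Ico, ← lintegral_indicator measurableSet_Ico]
        apply lintegral_mono
        intro x
        by_cases hx : x ∈ Set.Ico (0:ℝ) r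
        · simpa [Set.indicator_of_mem hx] using hpt x hx
        · simp [Set.indicator_of_notMem hx]
      refine step.trans ?_
      rw [lintegral_add_right _ measurable_const, setLIntegral_const]
    have hvol : ENNReal.ofReal (c * μ 0) * volume (Set.Ico (0:ℝ) r) ≠ ⊤ := by
      rw [Real.volume_Ico]
      exact ENNReal.mul_ne_top ENNReal.ofReal_ne_top ENNReal.ofReal_ne_top
    by_contra hne
    exact (ENNReal.add_ne_top.2 ⟨hne, hvol⟩) (top_le_iff.1 hle)
end

section
/- Let E be a real inner product space, b ∈ (0, +∞], K ≥ 0, let μ : ℝ → ℝ be differentiable on [0, b) with μ(t) > 0 and |μ'(t)| ≤ K·μ(t)² on [0, b), and let c : ℝ → E be twice differentiable on [0, b) with c''(t) = μ(t)² • c(t) and c'(t) ≠ 0 on [0, b). Assume ⟪c'(0), c(0)⟫ > 0 and ∫_{[0,b)} μ(s) ds = +∞. Then the curve c has infinite length on [0, b), i.e. ∫_{[0,b)} ‖c'(s)‖ ds = +∞. -/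
open MeasureTheory
open scoped RealInnerProductSpace ENNReal

/-- If `g` has nonnegative derivative on `[0, t]`, then `g 0 ≤ g t`. -/
private lemma mono_aux {g g' : ℝ → ℝ} {t : ℝ} (ht : 0 ≤ t)
    (hg : ∀ x ∈ Set.Icc (0:ℝ) t, HasDerivAt g (g' x) x)
    (h0 : ∀ x ∈ Set.Icc (0:ℝ) t, 0 ≤ g' x) : g 0 ≤ g t := by
  have hmono := monotoneOn_of_deriv_nonneg (convex_Icc (0:ℝ) t)
    (fun x hx => (hg x hx).continuousAt.continuousWithinAt)
    (fun x hx =>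
      ((hg x (interior_subset hx)).differentiableAt.differentiableWithinAt))
    (fun x hx => by
      rw [(hg x (interior_subset hx)).deriv]; exact h0 x (interior_subset hx))
  exact hmono (Set.left_mem_Icc.mpr ht) (Set.right_mem_Icc.mpr ht) ht

/-- Infinite length of the developing image of a maximal geodesic: on `[0, b)`
(with `b ∈ (0, +∞]`), if `c'' = μ² • c`, `c' ≠ 0`, `μ > 0`, `|μ'| ≤ K μ²`,
`⟪c'(0), c(0)⟫ > 0` and `∫_{[0,b)} μ = +∞`, then `∫_{[0,b)} ‖c'‖ = +∞`. -/
theorem stmt_6 (E : Type*) [NormedAddCommGroup E] [InnerProductSpace ℝ E]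
    (b : EReal) (hb : 0 < b) (K : ℝ) (hK : 0 ≤ K) (μ μ' : ℝ → ℝ) (c c' c'' : ℝ → E)
    (hμderiv : ∀ t : ℝ, 0 ≤ t → (t : EReal) < b → HasDerivAt μ (μ' t) t)
    (hμpos : ∀ t : ℝ, 0 ≤ t → (t : EReal) < b → 0 < μ t)
    (hμ' : ∀ t : ℝ, 0 ≤ t → (t : EReal) < b → |μ' t| ≤ K * μ t ^ 2)
    (hc : ∀ t : ℝ, 0 ≤ t → (t : EReal) < b → HasDerivAt c (c' t) t)
    (hc' : ∀ t : ℝ, 0 ≤ t → (t : EReal) < b → HasDerivAt c' (c'' t) t)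
    (hode : ∀ t : ℝ, 0 ≤ t → (t : EReal) < b → c'' t = μ t ^ 2 • c t)
    (hne : ∀ t : ℝ, 0 ≤ t → (t : EReal) < b → c' t ≠ 0)
    (hinit : 0 < ⟪c' 0, c 0⟫)
    (hdiv : ∫⁻ s in {t : ℝ | 0 ≤ t ∧ (t : EReal) < b}, ENNReal.ofReal (μ s) = ⊤) :
    ∫⁻ s in {t : ℝ | 0 ≤ t ∧ (t : EReal) < b}, ENNReal.ofReal ‖c' s‖ = ⊤ := by
  by_contra hfin
  set S : Set ℝ := {t : ℝ | 0 ≤ t ∧ (t : EReal) < b} with hSdef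
  set L : ℝ≥0∞ := ∫⁻ s in S, ENNReal.ofReal ‖c' s‖ with hLdef
  have hLne : L ≠ ⊤ := hfin
  have h0S : (0:ℝ) ∈ S := ⟨le_refl 0, by simpa using hb⟩
  have hIccS : ∀ {t : ℝ}, t ∈ S → Set.Icc (0:ℝ) t ⊆ S := by
    rintro t ⟨ht0, htb⟩ x ⟨hx0, hxt⟩
    exact ⟨hx0, lt_of_le_of_lt (EReal.coe_le_coe_iff.mpr hxt) htb⟩
  -- the function f = ⟪c', c⟫ and its derivative
  set f : ℝ → ℝ := fun t => ⟪c' t, c t⟫ with hfdef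
  have hf : ∀ t ∈ S, HasDerivAt f (‖c' t‖ ^ 2 + μ t ^ 2 * ‖c t‖ ^ 2) t := by
    intro t ht
    have h := HasDerivAt.inner ℝ (hc' t ht.1 ht.2) (hc t ht.1 ht.2)
    have heq : ⟪c' t, c' t⟫ + ⟪c'' t, c t⟫ = ‖c' t‖ ^ 2 + μ t ^ 2 * ‖c t‖ ^ 2 := by
      rw [hode t ht.1 ht.2, real_inner_smul_left, real_inner_self_eq_norm_sq,
        real_inner_self_eq_norm_sq]
    rw [← heq]
    exact h
  have hf0 : 0 < f 0 := hinit
  have hfmono : ∀ t ∈ S, f 0 ≤ f t := fun t ht =>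
    mono_aux ht.1 (fun x hx => hf x (hIccS ht hx))
      (fun x _ => add_nonneg (sq_nonneg _) (mul_nonneg (sq_nonneg _) (sq_nonneg _)))
  have hfpos : ∀ t ∈ S, 0 < f t := fun t ht => lt_of_lt_of_le hf0 (hfmono t ht)
  -- the function r = ⟪c, c⟫ = ‖c‖² is nondecreasing
  set r : ℝ → ℝ := fun t => ⟪c t, c t⟫ with hrdef
  have hrnorm : ∀ t : ℝ, r t = ‖c t‖ ^ 2 := by
    intro t
    simp only [hrdef]
    exact real_inner_self_eq_norm_sq (c t)
  have hr : ∀ t ∈ S, HasDerivAt r (2 * f t) t := by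
    intro t ht
    have h := HasDerivAt.inner ℝ (hc t ht.1 ht.2) (hc t ht.1 ht.2)
    have heq : ⟪c t, c' t⟫ + ⟪c' t, c t⟫ = 2 * f t := by
      simp only [hfdef]
      rw [real_inner_comm (c t) (c' t)]
      ring
    rw [← heq]
    exact h
  have hrmono : ∀ t ∈ S, r 0 ≤ r t := fun t ht =>
    mono_aux ht.1 (fun x hx => hr x (hIccS ht hx))
      (fun x hx => by linarith [hfpos x (hIccS ht hx)])
  have hc0ne : c 0 ≠ 0 := by
    intro h
    rw [hfdef] at hf0
    simp only [h, inner_zero_right] at hf0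
    exact lt_irrefl 0 hf0
  have hr0pos : 0 < r 0 := by
    rw [hrnorm 0]
    exact pow_pos (norm_pos_iff.mpr hc0ne) 2
  have hrlb : ∀ t ∈ S, r 0 ≤ ‖c t‖ ^ 2 := by
    intro t ht
    have h := hrmono t ht
    rw [hrnorm t] at h
    exact h
  have hcpos : ∀ t ∈ S, 0 < ‖c t‖ := by
    intro t ht
    have h := hrlb t ht
    nlinarith [norm_nonneg (c t)]
  -- the constant α
  have hμ0 : 0 < μ 0 := hμpos 0 h0S.1 h0S.2
  set α : ℝ := min (f 0 / μ 0) (r 0 / (K + 1)) with hαdef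
  have hα : 0 < α := lt_min (div_pos hf0 hμ0) (div_pos hr0pos (by linarith))
  have hαK : α * K ≤ r 0 := by
    have h1 : α ≤ r 0 / (K + 1) := min_le_right _ _
    have h2 : (0:ℝ) < K + 1 := by linarith
    have h3 : r 0 / (K + 1) * K ≤ r 0 := by
      rw [div_mul_eq_mul_div, div_le_iff₀ h2]
      nlinarith
    exact le_trans (mul_le_mul_of_nonneg_right h1 hK) h3
  -- α μ ≤ f on S
  have hαμ : ∀ t ∈ S, α * μ t ≤ f t := by
    intro t ht
    have hg : ∀ x ∈ Set.Icc (0:ℝ) t, HasDerivAt (fun x => f x - α * μ x)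
        ((‖c' x‖ ^ 2 + μ x ^ 2 * ‖c x‖ ^ 2) - α * μ' x) x := by
      intro x hx
      have hxS := hIccS ht hx
      exact (hf x hxS).sub ((hμderiv x hxS.1 hxS.2).const_mul α)
    have hg' : ∀ x ∈ Set.Icc (0:ℝ) t,
        0 ≤ (‖c' x‖ ^ 2 + μ x ^ 2 * ‖c x‖ ^ 2) - α * μ' x := by
      intro x hx
      have hxS := hIccS ht hx
      have h1 : μ' x ≤ K * μ x ^ 2 := le_trans (le_abs_self _) (hμ' x hxS.1 hxS.2)
      have h3 : μ x ^ 2 * r 0 ≤ μ x ^ 2 * ‖c x‖ ^ 2 :=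
        mul_le_mul_of_nonneg_left (hrlb x hxS) (sq_nonneg _)
      have h4 : α * μ' x ≤ α * (K * μ x ^ 2) :=
        mul_le_mul_of_nonneg_left h1 hα.le
      have h5 : 0 ≤ μ x ^ 2 * (r 0 - α * K) :=
        mul_nonneg (sq_nonneg _) (by linarith)
      nlinarith [sq_nonneg ‖c' x‖]
    have hmono : f 0 - α * μ 0 ≤ f t - α * μ t := mono_aux ht.1 hg hg'
    have hg0 : 0 ≤ f 0 - α * μ 0 := by
      have h1 : α ≤ f 0 / μ 0 := min_le_left _ _
      have := (le_div_iff₀ hμ0).mp h1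
      linarith
    linarith
  -- bound on ‖c t‖
  set M : ℝ := ‖c 0‖ + L.toReal with hMdef
  have hMpos : 0 < M := by
    have h1 : 0 < ‖c 0‖ := norm_pos_iff.mpr hc0ne
    have h2 := ENNReal.toReal_nonneg (a := L)
    rw [hMdef]; linarith
  -- derivative of the norm of c
  have hn : ∀ t ∈ S, HasDerivAt (fun x => ‖c x‖) (f t / ‖c t‖) t := by
    intro t ht
    have hrt : r t ≠ 0 := by
      have := lt_of_lt_of_le hr0pos (hrmono t ht); exact this.ne'
    have h := HasDerivAt.sqrt (hr t ht) hrt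
    have heq1 : (fun x => Real.sqrt (r x)) = fun x => ‖c x‖ := by
      funext x
      rw [hrnorm x, Real.sqrt_sq (norm_nonneg _)]
    have heq2 : 2 * f t / (2 * Real.sqrt (r t)) = f t / ‖c t‖ := by
      rw [hrnorm t, Real.sqrt_sq (norm_nonneg _)]
      have hcpos' := hcpos t ht
      field_simp
    rw [heq1, heq2] at h
    exact h
  have hcM : ∀ t ∈ S, ‖c t‖ ≤ M := by
    intro t ht
    have hIcc := hIccS ht
    have hderivs : ∀ x ∈ Set.uIcc (0:ℝ) t, HasDerivAt (fun x => ‖c x‖) (f x / ‖c x‖) x := by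
      intro x hx
      rw [Set.uIcc_of_le ht.1] at hx
      exact hn x (hIcc hx)
    have hcontf : ContinuousOn f (Set.Icc 0 t) := fun x hx =>
      (hf x (hIcc hx)).continuousAt.continuousWithinAt
    have hcontc : ContinuousOn (fun x => ‖c x‖) (Set.Icc 0 t) := fun x hx =>
      ((hc x (hIcc hx).1 (hIcc hx).2).continuousAt.norm).continuousWithinAt
    have hcontq : ContinuousOn (fun x => f x / ‖c x‖) (Set.Icc 0 t) :=
      hcontf.div hcontc (fun x hx => (hcpos x (hIcc hx)).ne')
    have hIntq : IntervalIntegrable (fun x => f x / ‖c x‖) volume 0 t :=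
      hcontq.intervalIntegrable_of_Icc ht.1
    have hcontn : ContinuousOn (fun x => ‖c' x‖) (Set.Icc 0 t) := fun x hx =>
      ((hc' x (hIcc hx).1 (hIcc hx).2).continuousAt.norm).continuousWithinAt
    have hIntn : IntervalIntegrable (fun x => ‖c' x‖) volume 0 t :=
      hcontn.intervalIntegrable_of_Icc ht.1
    have hftc : ∫ y in (0:ℝ)..t, f y / ‖c y‖ = ‖c t‖ - ‖c 0‖ :=
      intervalIntegral.integral_eq_sub_of_hasDerivAt hderivs hIntq
    have hmono_int : (∫ y in (0:ℝ)..t, f y / ‖c y‖) ≤ ∫ y in (0:ℝ)..t, ‖c' y‖ := by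
      apply intervalIntegral.integral_mono_on ht.1 hIntq hIntn
      intro x hx
      have hxS := hIcc hx
      rw [div_le_iff₀ (hcpos x hxS)]
      have := real_inner_le_norm (c' x) (c x)
      simpa [hfdef] using this
    have h2 : (∫ y in (0:ℝ)..t, ‖c' y‖) = ∫ y in Set.Ioc 0 t, ‖c' y‖ :=
      intervalIntegral.integral_of_le ht.1
    have hnormInt : IntegrableOn (fun y => ‖c' y‖) (Set.Ioc 0 t) :=
      (hcontn.integrableOn_Icc).mono_set Set.Ioc_subset_Icc_self
    have h3 : ENNReal.ofReal (∫ y in Set.Ioc 0 t, ‖c' y‖) =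
        ∫⁻ y in Set.Ioc 0 t, ENNReal.ofReal ‖c' y‖ :=
      ofReal_integral_eq_lintegral_ofReal hnormInt
        (Filter.Eventually.of_forall fun _ => norm_nonneg _)
    have h4 : (∫⁻ y in Set.Ioc 0 t, ENNReal.ofReal ‖c' y‖) ≤ L := by
      apply lintegral_mono_set
      intro x hx
      exact ⟨hx.1.le, lt_of_le_of_lt (EReal.coe_le_coe_iff.mpr hx.2) ht.2⟩
    have h5 : (0:ℝ) ≤ ∫ y in Set.Ioc 0 t, ‖c' y‖ :=
      integral_nonneg fun y => norm_nonneg _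
    have h6 : (∫ y in Set.Ioc 0 t, ‖c' y‖) ≤ L.toReal := by
      have := ENNReal.toReal_mono hLne (h3 ▸ h4)
      rwa [ENNReal.toReal_ofReal h5] at this
    rw [hMdef]
    linarith
  -- the final comparison
  have hkey : ∀ t ∈ S, ENNReal.ofReal (μ t) ≤
      ENNReal.ofReal (M / α) * ENNReal.ofReal ‖c' t‖ := by
    intro t ht
    have h1 : α * μ t ≤ f t := hαμ t ht
    have h2 : f t ≤ ‖c' t‖ * ‖c t‖ := real_inner_le_norm _ _
    have h3 : ‖c' t‖ * ‖c t‖ ≤ ‖c' t‖ * M :=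
      mul_le_mul_of_nonneg_left (hcM t ht) (norm_nonneg _)
    have h4 : μ t ≤ (M / α) * ‖c' t‖ := by
      rw [div_mul_eq_mul_div, le_div_iff₀ hα]
      nlinarith
    rw [← ENNReal.ofReal_mul (div_nonneg hMpos.le hα.le)]
    exact ENNReal.ofReal_le_ofReal h4
  have hSmeas : MeasurableSet S := by
    have h : S = Set.Ici (0:ℝ) ∩ (((↑) : ℝ → EReal) ⁻¹' Set.Iio b) := rfl
    rw [h]
    exact measurableSet_Ici.inter
      ((isOpen_Iio.preimage continuous_coe_real_ereal).measurableSet)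
  have hcontra : (⊤ : ℝ≥0∞) < ⊤ := by
    calc (⊤ : ℝ≥0∞) = ∫⁻ s in S, ENNReal.ofReal (μ s) := hdiv.symm
      _ ≤ ∫⁻ s in S, ENNReal.ofReal (M / α) * ENNReal.ofReal ‖c' s‖ :=
          setLIntegral_mono' hSmeas hkey
      _ = ENNReal.ofReal (M / α) * L :=
          lintegral_const_mul' _ _ ENNReal.ofReal_ne_top
      _ < ⊤ := ENNReal.mul_lt_top ENNReal.ofReal_lt_top hLne.lt_top
  exact lt_irrefl _ hcontra
end

section
/- Let f : ℝ → ℝ be twice differentiable and M ≥ 0. If |f(t)| ≤ M for all t ∈ ℝ and f''(t) ≤ f(t) for all t ∈ ℝ, then |f'(t)| ≤ 2M for all t ∈ ℝ. -/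
/-!
Since `f'' ≤ f ≤ M`, the function `f - M t²/2` is concave, so `f` lies below its tangent
parabola: `f (t + h) ≤ f t + h f' t + M h²/2` for every `h`. Taking `h = ±2` and using `|f| ≤ M`
at `t` and `t ± 2` gives `∓ f' t ≤ 2M`.
-/

open Set

lemma hasDerivAt_half_mul_sq (K t : ℝ) : HasDerivAt (fun t ↦ K / 2 * t ^ 2) (K * t) t :=
  ((hasDerivAt_pow 2 t).const_mul (K / 2)).congr_deriv (by ring)

lemma ConcaveOn.le_add_mul_sub_of_hasDerivAt {S : Set ℝ} {g : ℝ → ℝ} {g' x y : ℝ}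
    (hg : ConcaveOn ℝ S g) (hx : x ∈ S) (hy : y ∈ S) (hder : HasDerivAt g g' x) :
    g y ≤ g x + g' * (y - x) := by
  rcases lt_trichotomy x y with hxy | rfl | hyx
  · have hslope := hg.slope_le_of_hasDerivAt hx hy hxy hder
    rw [slope_def_field, div_le_iff₀ (sub_pos.2 hxy)] at hslope
    linarith
  · simp
  · have hslope := hg.le_slope_of_hasDerivAt hy hx hyx hder
    rw [slope_def_field, le_div_iff₀ (sub_pos.2 hyx)] at hslope
    linarith

lemma concaveOn_univ_sub_mul_sq_of_hasDerivAt_of_le {f f' f'' : ℝ → ℝ} {K : ℝ}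
    (hf : ∀ t, HasDerivAt f (f' t) t) (hf' : ∀ t, HasDerivAt f' (f'' t) t)
    (hK : ∀ t, f'' t ≤ K) :
    ConcaveOn ℝ univ (fun t ↦ f t - K / 2 * t ^ 2) := by
  have hder (t : ℝ) : HasDerivAt (fun t ↦ f t - K / 2 * t ^ 2) (f' t - K * t) t :=
    (hf t).sub (hasDerivAt_half_mul_sq K t)
  have hder' (t : ℝ) : HasDerivAt (fun t ↦ f' t - K * t) (f'' t - K) t :=
    ((hf' t).sub ((hasDerivAt_id t).const_mul K)).congr_deriv (by simp)
  exact concaveOn_of_hasDerivWithinAt2_nonpos convex_univ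
    (continuous_iff_continuousAt.2 fun t ↦ (hder t).continuousAt).continuousOn
    (fun t _ ↦ (hder t).hasDerivWithinAt) (fun t _ ↦ (hder' t).hasDerivWithinAt)
    (fun t _ ↦ sub_nonpos.2 (hK t))

lemma le_add_mul_add_half_mul_sq_of_hasDerivAt_of_le {f f' f'' : ℝ → ℝ} {K : ℝ}
    (hf : ∀ t, HasDerivAt f (f' t) t) (hf' : ∀ t, HasDerivAt f' (f'' t) t)
    (hK : ∀ t, f'' t ≤ K) (x y : ℝ) :
    f y ≤ f x + f' x * (y - x) + K / 2 * (y - x) ^ 2 := by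
  have := (concaveOn_univ_sub_mul_sq_of_hasDerivAt_of_le hf hf' hK).le_add_mul_sub_of_hasDerivAt
    (mem_univ x) (mem_univ y) ((hf x).sub (hasDerivAt_half_mul_sq K x))
  linarith

theorem stmt_7_general (f f' f'' : ℝ → ℝ) (M : ℝ)
    (hf : ∀ t : ℝ, HasDerivAt f (f' t) t)
    (hf' : ∀ t : ℝ, HasDerivAt f' (f'' t) t)
    (hbound : ∀ t : ℝ, |f t| ≤ M)
    (hineq : ∀ t : ℝ, f'' t ≤ f t) :
    ∀ t : ℝ, |f' t| ≤ 2 * M := by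
  intro t
  have hM : ∀ s, f'' s ≤ M := fun s ↦ (hineq s).trans (le_of_abs_le (hbound s))
  have hright := le_add_mul_add_half_mul_sq_of_hasDerivAt_of_le hf hf' hM t (t + 2)
  have hleft := le_add_mul_add_half_mul_sq_of_hasDerivAt_of_le hf hf' hM t (t - 2)
  have ht := abs_le.1 (hbound t)
  have htr := abs_le.1 (hbound (t + 2))
  have htl := abs_le.1 (hbound (t - 2))
  rw [abs_le]
  constructor <;> linarith

/-- C¹ bound: a twice differentiable function on `ℝ` with `|f| ≤ M` and
`f'' ≤ f` satisfies `|f'| ≤ 2M`. -/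
theorem stmt_7 (f f' f'' : ℝ → ℝ) (M : ℝ) (hM : 0 ≤ M)
    (hf : ∀ t : ℝ, HasDerivAt f (f' t) t)
    (hf' : ∀ t : ℝ, HasDerivAt f' (f'' t) t)
    (hbound : ∀ t : ℝ, |f t| ≤ M)
    (hineq : ∀ t : ℝ, f'' t ≤ f t) :
    ∀ t : ℝ, |f' t| ≤ 2 * M :=
  stmt_7_general f f' f'' M hf hf' hbound hineq
end

section
/- Let n ≥ 1, let C be a nonempty open convex cone in EuclideanSpace ℝ (Fin n) (C is open, nonempty, convex, and t • x ∈ C for all t > 0 and x ∈ C), and let C* = {y : ∀ x ∈ C, 0 ≤ ⟪x, y⟫} be its dual cone. Then for every x ∈ C, the function y ↦ exp(−⟪x, y⟫) is integrable on C* with respect to Lebesgue measure. -/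
open MeasureTheory
open scoped RealInnerProductSpace

lemma exp_neg_le_aux (ε : ℝ) (hε : 0 < ε) (m : ℕ) (t : ℝ) (ht : 0 ≤ t) :
    Real.exp (-(ε * t)) ≤ (Real.exp ε * m.factorial / ε ^ m) * (1 + t) ^ (-(m : ℝ)) := by
  have h1 : (0:ℝ) < 1 + t := by linarith
  set M : ℝ := Real.exp ε * m.factorial / ε ^ m with hM
  have hfac : (0:ℝ) < m.factorial := by positivity
  have key : (ε * (1 + t)) ^ m / m.factorial ≤ Real.exp (ε * (1 + t)) :=
    Real.pow_div_factorial_le_exp (x := ε * (1 + t)) (mul_nonneg hε.le h1.le) m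
  have hexp : Real.exp (ε * (1 + t)) = Real.exp ε * Real.exp (ε * t) := by
    rw [← Real.exp_add]; ring_nf
  have h2 : (1 + t) ^ m ≤ M * Real.exp (ε * t) := by
    rw [div_le_iff₀ hfac, mul_pow, hexp] at key
    rw [hM, div_mul_eq_mul_div, le_div_iff₀ (by positivity : (0:ℝ) < ε ^ m)]
    nlinarith
  have hexpmul : Real.exp (-(ε * t)) * Real.exp (ε * t) = 1 := by
    rw [← Real.exp_add]; simp
  have hA : Real.exp (-(ε * t)) * (1 + t) ^ m ≤ M := by
    have h3 := mul_le_mul_of_nonneg_left h2 (Real.exp_pos (-(ε * t))).le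
    calc Real.exp (-(ε * t)) * (1 + t) ^ m
        ≤ Real.exp (-(ε * t)) * (M * Real.exp (ε * t)) := h3
      _ = M * (Real.exp (-(ε * t)) * Real.exp (ε * t)) := by ring
      _ = M := by rw [hexpmul, mul_one]
  have hpow : (0:ℝ) < (1 + t) ^ m := by positivity
  rw [Real.rpow_neg h1.le, Real.rpow_natCast, ← div_eq_mul_inv, le_div_iff₀ hpow]
  exact hA

/-- Finiteness of Vinberg's characteristic function: for `x` in a nonempty open
convex cone `C ⊆ ℝⁿ`, the function `y ↦ exp (−⟪x, y⟫)` is integrable on the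
dual cone `C* = {y | ∀ x ∈ C, 0 ≤ ⟪x, y⟫}`. -/
theorem stmt_12 (n : ℕ) (hn : 1 ≤ n) (C : Set (EuclideanSpace ℝ (Fin n)))
    (hopen : IsOpen C) (hne : C.Nonempty) (hconv : Convex ℝ C)
    (hcone : ∀ t : ℝ, 0 < t → ∀ x ∈ C, t • x ∈ C) :
    ∀ x ∈ C,
      IntegrableOn (fun y : EuclideanSpace ℝ (Fin n) => Real.exp (-⟪x, y⟫))
        {y : EuclideanSpace ℝ (Fin n) | ∀ x' ∈ C, 0 ≤ ⟪x', y⟫} volume := by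
  intro x hx
  obtain ⟨ε, hε, hball⟩ := Metric.isOpen_iff.mp hopen x hx
  set δ := ε / 2 with hδdef
  have hδ : 0 < δ := by positivity
  -- lower bound on the inner product over the dual cone
  have hlow : ∀ y ∈ {y : EuclideanSpace ℝ (Fin n) | ∀ x' ∈ C, 0 ≤ ⟪x', y⟫},
      δ * ‖y‖ ≤ ⟪x, y⟫ := by
    intro y hy
    rcases eq_or_ne y 0 with rfl | hy0
    · simp [inner_zero_right]
    · have hny : (0:ℝ) < ‖y‖ := norm_pos_iff.mpr hy0
      set u : EuclideanSpace ℝ (Fin n) := x - (δ * ‖y‖⁻¹) • y with hu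
      have hu_mem : u ∈ C := by
        apply hball
        simp only [hu, Metric.mem_ball, dist_eq_norm]
        have : x - (δ * ‖y‖⁻¹) • y - x = -((δ * ‖y‖⁻¹) • y) := by abel
        rw [this, norm_neg, norm_smul]
        simp only [Real.norm_eq_abs, abs_of_pos (by positivity : (0:ℝ) < δ * ‖y‖⁻¹)]
        rw [mul_assoc, inv_mul_cancel₀ hny.ne', mul_one]
        linarith
      have h0 := hy u hu_mem
      rw [hu, inner_sub_left, real_inner_smul_left, real_inner_self_eq_norm_sq] at h0
      have : ⟪x, y⟫ ≥ δ * ‖y‖⁻¹ * (‖y‖ * ‖y‖) := by nlinarith [sq_nonneg ‖y‖]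
      calc δ * ‖y‖ = δ * ‖y‖⁻¹ * (‖y‖ * ‖y‖) := by field_simp
        _ ≤ ⟪x, y⟫ := this
  -- measurability of the dual cone
  have hsmeas : MeasurableSet {y : EuclideanSpace ℝ (Fin n) | ∀ x' ∈ C, 0 ≤ ⟪x', y⟫} := by
    have : {y : EuclideanSpace ℝ (Fin n) | ∀ x' ∈ C, 0 ≤ ⟪x', y⟫} =
        ⋂ x' ∈ C, {y | 0 ≤ ⟪x', y⟫} := by
      ext y; simp [Set.mem_iInter]
    rw [this]
    refine IsClosed.measurableSet (isClosed_biInter fun x' _ => ?_)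
    exact isClosed_le continuous_const (continuous_const.inner continuous_id)
  -- dominating function
  set M : ℝ := Real.exp δ * (n+1).factorial / δ ^ (n+1) with hM
  have hdom : Integrable (fun y : EuclideanSpace ℝ (Fin n) =>
      M * (1 + ‖y‖) ^ (-((n+1 : ℕ) : ℝ))) volume := by
    apply Integrable.const_mul
    apply integrable_one_add_norm
    rw [finrank_euclideanSpace, Fintype.card_fin]
    push_cast; linarith
  apply (hdom.integrableOn).mono' ?_ ?_
  · exact (Real.continuous_exp.comp
      (continuous_const.inner continuous_id).neg).aestronglyMeasurable
  · filter_upwards [ae_restrict_mem hsmeas] with y hy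
    rw [Real.norm_eq_abs, abs_of_pos (Real.exp_pos _)]
    calc Real.exp (-⟪x, y⟫) ≤ Real.exp (-(δ * ‖y‖)) := by
          apply Real.exp_le_exp.mpr
          have := hlow y hy
          linarith
      _ ≤ M * (1 + ‖y‖) ^ (-((n+1 : ℕ) : ℝ)) := by
          simpa [hM] using exp_neg_le_aux δ hδ (n+1) ‖y‖ (norm_nonneg y)
end

section
/- Let n ≥ 1, let C be a nonempty open convex cone in EuclideanSpace ℝ (Fin n) (C is open, nonempty, convex, and t • x ∈ C for all t > 0 and x ∈ C), let C* = {y : ∀ x ∈ C, 0 ≤ ⟪x, y⟫} be its dual cone, and define Vinberg's characteristic function V(x) = ∫_{C*} exp(−⟪x, y⟫) dy (Lebesgue integral). Then V is convex on C, i.e. ConvexOn ℝ C V. -/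
open MeasureTheory
open scoped RealInnerProductSpace

/-- Elementary bound: `exp(-(c t)) ≤ K (1+t)^(-m)` for `t ≥ 0`. -/
lemma aux_exp_decay_bound {c t : ℝ} (hc : 0 < c) (ht : 0 ≤ t) (m : ℕ) :
    Real.exp (-(c * t)) ≤ (Real.exp c * m.factorial / c ^ m) * (1 + t) ^ (-(m : ℝ)) := by
  have h1 : (0:ℝ) < 1 + t := by linarith
  have hE : 0 < Real.exp (c * (1 + t)) := Real.exp_pos _
  have hfac : (0:ℝ) < m.factorial := by positivity
  have hcm : (0:ℝ) < c ^ m := by positivity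
  have h2 : c ^ m * (1 + t) ^ m ≤ (m.factorial : ℝ) * Real.exp (c * (1 + t)) := by
    have h := Real.pow_div_factorial_le_exp (c * (1 + t)) (by positivity) m
    rw [div_le_iff₀ hfac] at h
    calc c ^ m * (1 + t) ^ m = (c * (1 + t)) ^ m := (mul_pow _ _ _).symm
      _ ≤ Real.exp (c * (1 + t)) * m.factorial := h
      _ = (m.factorial : ℝ) * Real.exp (c * (1 + t)) := mul_comm _ _
  have hL : Real.exp (-(c * t)) = Real.exp c / Real.exp (c * (1 + t)) := by
    rw [← Real.exp_sub]; ring_nf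
  have hR : Real.exp c * (m.factorial : ℝ) / c ^ m * (1 + t) ^ (-(m : ℝ)) =
      (Real.exp c * m.factorial) / (c ^ m * (1 + t) ^ m) := by
    rw [Real.rpow_neg h1.le, Real.rpow_natCast]
    field_simp
  rw [hL, hR, div_le_div_iff₀ hE (by positivity)]
  nlinarith [Real.exp_pos c, h2, mul_le_mul_of_nonneg_left h2 (Real.exp_pos c).le]

/-- Integrability of `exp(-(c‖y‖))` on `ℝⁿ`. -/
lemma aux_integrable_exp_norm (n : ℕ) {c : ℝ} (hc : 0 < c) :
    Integrable (fun y : EuclideanSpace ℝ (Fin n) => Real.exp (-(c * ‖y‖))) := by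
  have hnr : ((Module.finrank ℝ (EuclideanSpace ℝ (Fin n))) : ℝ) < ((n + 1 : ℕ) : ℝ) := by
    rw [finrank_euclideanSpace_fin]
    exact_mod_cast Nat.lt_succ_self n
  have hint : Integrable
      (fun y : EuclideanSpace ℝ (Fin n) => (1 + ‖y‖) ^ (-((n + 1 : ℕ) : ℝ))) volume :=
    integrable_one_add_norm hnr
  refine (hint.const_mul (Real.exp c * (n + 1).factorial / c ^ (n + 1))).mono' ?_ ?_
  · exact (Real.continuous_exp.comp (continuous_const.mul continuous_norm).neg).aestronglyMeasurable
  · filter_upwards with y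
    rw [Real.norm_eq_abs, abs_of_nonneg (Real.exp_pos _).le]
    exact aux_exp_decay_bound hc (norm_nonneg y) (n + 1)

/-- Convexity of Vinberg's characteristic function
`V(x) = ∫_{C*} exp(−⟪x, y⟫) dy` on a nonempty open convex cone `C ⊆ ℝⁿ`. -/
theorem stmt_13 (n : ℕ) (hn : 1 ≤ n) (C : Set (EuclideanSpace ℝ (Fin n)))
    (hopen : IsOpen C) (hne : C.Nonempty) (hconv : Convex ℝ C)
    (hcone : ∀ t : ℝ, 0 < t → ∀ x ∈ C, t • x ∈ C) :
    ConvexOn ℝ C (fun x : EuclideanSpace ℝ (Fin n) =>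
      ∫ y in {y : EuclideanSpace ℝ (Fin n) | ∀ x' ∈ C, 0 ≤ ⟪x', y⟫},
        Real.exp (-⟪x, y⟫)) := by
  set D : Set (EuclideanSpace ℝ (Fin n)) :=
    {y : EuclideanSpace ℝ (Fin n) | ∀ x' ∈ C, 0 ≤ ⟪x', y⟫} with hD
  -- D is closed, hence measurable
  have hDclosed : IsClosed D := by
    have : D = ⋂ x' ∈ C, {y : EuclideanSpace ℝ (Fin n) | 0 ≤ ⟪x', y⟫} := by
      ext y; simp [hD, Set.mem_iInter]
    rw [this]
    refine isClosed_biInter fun x' _ => ?_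
    exact isClosed_le continuous_const (innerSL ℝ x').continuous
  have hDmeas : MeasurableSet D := hDclosed.measurableSet
  -- Key integrability lemma
  have key : ∀ x ∈ C, IntegrableOn
      (fun y : EuclideanSpace ℝ (Fin n) => Real.exp (-⟪x, y⟫)) D := by
    intro x hx
    obtain ⟨ε, hε, hball⟩ := Metric.isOpen_iff.mp hopen x hx
    set c : ℝ := ε / 2 with hc
    have hcpos : 0 < c := by positivity
    have hlow : ∀ y ∈ D, c * ‖y‖ ≤ ⟪x, y⟫ := by
      intro y hy
      rcases eq_or_ne y 0 with rfl | hy0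
      · simp
      · have hny : 0 < ‖y‖ := norm_pos_iff.mpr hy0
        have hu : x - (c / ‖y‖) • y ∈ C := by
          apply hball
          rw [Metric.mem_ball, dist_eq_norm]
          have : x - (c / ‖y‖) • y - x = -((c / ‖y‖) • y) := by abel
          rw [this, norm_neg, norm_smul, Real.norm_eq_abs,
            abs_of_pos (by positivity : (0:ℝ) < c / ‖y‖), div_mul_cancel₀ _ hny.ne']
          linarith
        have h0 := hy _ hu
        rw [inner_sub_left, real_inner_smul_left, real_inner_self_eq_norm_mul_norm] at h0
        have : c / ‖y‖ * (‖y‖ * ‖y‖) = c * ‖y‖ := by field_simp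
        rw [this] at h0
        linarith
    refine ((aux_integrable_exp_norm n hcpos).restrict (s := D)).mono' ?_ ?_
    · exact (Real.continuous_exp.comp
        ((innerSL ℝ x).continuous.neg)).aestronglyMeasurable.restrict
    · rw [ae_restrict_iff' hDmeas]
      filter_upwards with y hy
      rw [Real.norm_eq_abs, abs_of_nonneg (Real.exp_pos _).le]
      exact Real.exp_le_exp.mpr (by linarith [hlow y hy])
  -- Now the convexity argument
  refine ⟨hconv, fun x hx z hz a b ha hb hab => ?_⟩
  have hxz : a • x + b • z ∈ C := hconv hx hz ha hb hab
  have hfx := key x hx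
  have hfz := key z hz
  have hfxz := key _ hxz
  have hpt : ∀ y : EuclideanSpace ℝ (Fin n),
      Real.exp (-⟪a • x + b • z, y⟫) ≤
        a * Real.exp (-⟪x, y⟫) + b * Real.exp (-⟪z, y⟫) := by
    intro y
    have hinner : -⟪a • x + b • z, y⟫ = a * (-⟪x, y⟫) + b * (-⟪z, y⟫) := by
      rw [inner_add_left, real_inner_smul_left, real_inner_smul_left]; ring
    rw [hinner]
    have := convexOn_exp.2 (Set.mem_univ (-⟪x, y⟫)) (Set.mem_univ (-⟪z, y⟫)) ha hb hab
    simpa using this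
  calc ∫ y in D, Real.exp (-⟪a • x + b • z, y⟫)
      ≤ ∫ y in D, (a * Real.exp (-⟪x, y⟫) + b * Real.exp (-⟪z, y⟫)) := by
        exact integral_mono hfxz ((hfx.const_mul a).add (hfz.const_mul b)) fun y => hpt y
    _ = a * (∫ y in D, Real.exp (-⟪x, y⟫)) + b * (∫ y in D, Real.exp (-⟪z, y⟫)) := by
        rw [integral_add (hfx.const_mul a) (hfz.const_mul b),
          integral_const_mul, integral_const_mul]
    _ = a • (∫ y in D, Real.exp (-⟪x, y⟫)) + b • (∫ y in D, Real.exp (-⟪z, y⟫)) := by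
        simp only [smul_eq_mul]
end

section
/- Let n ≥ 1, let C be a nonempty open convex cone in EuclideanSpace ℝ (Fin n) (C is open, nonempty, convex, and t • x ∈ C for all t > 0 and x ∈ C), let C* = {y : ∀ x ∈ C, 0 ≤ ⟪x, y⟫} be its dual cone, and define Vinberg's characteristic function V(x) = ∫_{C*} exp(−⟪x, y⟫) dy (Lebesgue integral). Let g be a linear automorphism of EuclideanSpace ℝ (Fin n) with |det g| = 1 and g '' C = C. Then V(g x) = V(x) for every x ∈ C. -/
open MeasureTheory
open scoped RealInnerProductSpace

/-- Invariance of Vinberg's characteristic function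
`V(x) = ∫_{C*} exp(−⟪x, y⟫) dy` under unimodular linear automorphisms
preserving the cone: if `|det g| = 1` and `g '' C = C` then `V(g x) = V(x)`
for every `x ∈ C`. -/
theorem stmt_15 (n : ℕ) (hn : 1 ≤ n) (C : Set (EuclideanSpace ℝ (Fin n)))
    (hopen : IsOpen C) (hne : C.Nonempty) (hconv : Convex ℝ C)
    (hcone : ∀ t : ℝ, 0 < t → ∀ x ∈ C, t • x ∈ C)
    (V : EuclideanSpace ℝ (Fin n) → ℝ)
    (hV : ∀ x, V x =
      ∫ y in {y : EuclideanSpace ℝ (Fin n) | ∀ x' ∈ C, 0 ≤ ⟪x', y⟫},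
        Real.exp (-⟪x, y⟫))
    (g : EuclideanSpace ℝ (Fin n) ≃ₗ[ℝ] EuclideanSpace ℝ (Fin n))
    (hdet : |LinearMap.det (g : EuclideanSpace ℝ (Fin n) →ₗ[ℝ] EuclideanSpace ℝ (Fin n))| = 1)
    (hgC : g '' C = C) :
    ∀ x ∈ C, V (g x) = V x := by
  intro x hx
  set D : Set (EuclideanSpace ℝ (Fin n)) := {y | ∀ x' ∈ C, 0 ≤ ⟪x', y⟫} with hD
  set T : EuclideanSpace ℝ (Fin n) →ₗ[ℝ] EuclideanSpace ℝ (Fin n) :=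
    LinearMap.adjoint (g : EuclideanSpace ℝ (Fin n) →ₗ[ℝ] EuclideanSpace ℝ (Fin n)) with hT
  have hgmem : ∀ c ∈ C, g c ∈ C := by
    intro c hc
    have : g c ∈ g '' C := Set.mem_image_of_mem _ hc
    rwa [hgC] at this
  have hgsymm : ∀ c ∈ C, g.symm c ∈ C := by
    intro c hc
    rw [← hgC] at hc
    obtain ⟨c', hc', rfl⟩ := hc
    simpa using hc'
  have hDclosed : IsClosed D := by
    have : D = ⋂ x' ∈ C, {y : EuclideanSpace ℝ (Fin n) | 0 ≤ ⟪x', y⟫} := by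
      ext y; simp [hD, Set.mem_iInter]
    rw [this]
    exact isClosed_biInter fun x' _ =>
      isClosed_le continuous_const (continuous_const.inner continuous_id)
  have hDmeas : MeasurableSet D := hDclosed.measurableSet
  have hTinv : ∀ z, T (LinearMap.adjoint
      (g.symm : EuclideanSpace ℝ (Fin n) →ₗ[ℝ] EuclideanSpace ℝ (Fin n)) z) = z := by
    intro z
    rw [hT, ← LinearMap.comp_apply, ← LinearMap.adjoint_comp]
    have h : (g.symm : EuclideanSpace ℝ (Fin n) →ₗ[ℝ] EuclideanSpace ℝ (Fin n)).comp
        (g : EuclideanSpace ℝ (Fin n) →ₗ[ℝ] EuclideanSpace ℝ (Fin n)) = LinearMap.id := by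
      ext v; simp
    rw [h]
    refine ext_inner_left ℝ fun v => ?_
    rw [LinearMap.adjoint_inner_right]
    simp
  have hTD : T '' D = D := by
    apply Set.Subset.antisymm
    · rintro _ ⟨y, hy, rfl⟩
      intro x' hx'
      rw [hT, LinearMap.adjoint_inner_right]
      exact hy _ (hgmem _ hx')
    · intro z hz
      refine ⟨LinearMap.adjoint
        (g.symm : EuclideanSpace ℝ (Fin n) →ₗ[ℝ] EuclideanSpace ℝ (Fin n)) z, ?_, hTinv z⟩
      intro x' hx'
      rw [LinearMap.adjoint_inner_right]
      exact hz _ (hgsymm _ hx')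
  have hdetT : |LinearMap.det T| = 1 := by
    have h : LinearMap.det T
        = LinearMap.det (g : EuclideanSpace ℝ (Fin n) →ₗ[ℝ] EuclideanSpace ℝ (Fin n)) := by
      rw [← LinearMap.det_toMatrix (EuclideanSpace.basisFun (Fin n) ℝ).toBasis T, hT,
        LinearMap.toMatrix_adjoint, Matrix.det_conjTranspose, star_trivial,
        LinearMap.det_toMatrix]
    rw [h]; exact hdet
  have hTsurj : Function.Surjective T := fun z => ⟨_, hTinv z⟩
  have hTinj : Function.Injective T :=
    (LinearMap.injective_iff_surjective (f := T)).mpr hTsurj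
  have hderiv : ∀ y ∈ D, HasFDerivWithinAt T (LinearMap.toContinuousLinearMap T) D y :=
    fun y _ => (LinearMap.toContinuousLinearMap T).hasFDerivAt.hasFDerivWithinAt
  have hcov := MeasureTheory.integral_image_eq_integral_abs_det_fderiv_smul
    (μ := volume) hDmeas hderiv (hTinj.injOn)
    (fun z : EuclideanSpace ℝ (Fin n) => Real.exp (-⟪x, z⟫))
  rw [hTD] at hcov
  rw [hV, hV, hcov]
  apply setIntegral_congr_fun hDmeas
  intro y _
  have hdet1 : |(LinearMap.toContinuousLinearMap T).det| = 1 := hdetT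
  simp only [hdet1, one_smul]
  rw [hT, LinearMap.adjoint_inner_right]
  rfl
end
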